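/- Let t₁, t₂ ≥ 0, C₁ ∈ Sep(X₁,…,X_m) with t₁·1_X − C₁ ∈ Sep(X₁,…,X_m)*, and C₂ ∈ Sep(Y₁,…,Y_m) with t₂·1_Y − C₂ ∈ Sep(Y₁,…,Y_m)*. Then t₁t₂·1_{X⊗Y} − C₁⊗C₂ ∈ Sep(X₁⊗Y₁,…,X_m⊗Y_m)*. -/

import Mathlib

open scoped Kronecker ComplexOrder

/-- Trace norm of a complex matrix: `Tr √(Aᴴ A)`. -/
noncomputable def traceNorm {n : Type*} [Fintype n] [DecidableEq n] (A : Matrix n n ℂ) : ℝ :=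
  ((Matrix.posSemidef_conjTranspose_mul_self A).1.eigenvectorUnitary.1 *
    Matrix.diagonal (((↑) : ℝ → ℂ) ∘ (√·) ∘ (Matrix.posSemidef_conjTranspose_mul_self A).1.eigenvalues) *
    (star (Matrix.posSemidef_conjTranspose_mul_self A).1.eigenvectorUnitary : Matrix n n ℂ)).trace.re

/-- Spectral (operator) norm of a complex matrix. -/
noncomputable def opNorm {n : Type*} [Fintype n] [DecidableEq n] (A : Matrix n n ℂ) : ℝ :=
  ‖Matrix.toEuclideanCLM (𝕜 := ℂ) A‖

/-- Tensor product of a family of `m` matrices, as a matrix on the product index. -/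
noncomputable def famTensor {m : ℕ} {ι : Fin m → Type*} [∀ j, Fintype (ι j)]
    (M : ∀ j, Matrix (ι j) (ι j) ℂ) : Matrix (∀ j, ι j) (∀ j, ι j) ℂ :=
  fun x y => ∏ j, M j (x j) (y j)

/-- Full separability across the partition `ι 1, …, ι m`. -/
def IsFullySep {m : ℕ} {ι : Fin m → Type*} [∀ j, Fintype (ι j)]
    (A : Matrix (∀ j, ι j) (∀ j, ι j) ℂ) : Prop :=
  ∃ (k : ℕ) (P : Fin k → ∀ j, Matrix (ι j) (ι j) ℂ),
    (∀ i j, (P i j).PosSemidef) ∧ A = ∑ i, famTensor (P i)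

/-- Membership in the dual cone of the fully separable operators. -/
def InSepDual {m : ℕ} {ι : Fin m → Type*} [∀ j, Fintype (ι j)]
    (W : Matrix (∀ j, ι j) (∀ j, ι j) ℂ) : Prop :=
  ∀ S : Matrix (∀ j, ι j) (∀ j, ι j) ℂ, IsFullySep S → 0 ≤ ((S * W).trace).re

/-- Partial trace over the second tensor factor. -/
noncomputable def ptraceY {ι κ : Type*} [Fintype κ] (M : Matrix (ι × κ) (ι × κ) ℂ) :
    Matrix ι ι ℂ :=
  fun i i' => ∑ k, M (i, k) (i', k)

/-- The natural identification `⨂ⱼ (Xⱼ ⊗ Yⱼ) ≃ (⨂ⱼ Xⱼ) ⊗ (⨂ⱼ Yⱼ)` on index sets. -/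
def piProd {m : ℕ} (ι κ : Fin m → Type*) : (∀ j, ι j × κ j) ≃ (∀ j, ι j) × (∀ j, κ j) where
  toFun f := (fun j => (f j).1, fun j => (f j).2)
  invFun p := fun j => (p.1 j, p.2 j)
  left_inv _ := rfl
  right_inv _ := rfl

/-! The operator splits as `t₁t₂·1 − C₁⊗C₂ = ½[(t₁1−C₁)⊗(t₂1+C₂) + (t₁1+C₁)⊗(t₂1−C₂)]`, so it
suffices that tensoring a dual-cone element with a separable one stays in the dual cone. Tested
against a product `⨂ⱼ Pⱼ`, the pairing with `A ⊗ ⨂ⱼ Qⱼ` is the pairing of `A` with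
`⨂ⱼ Tr_Y[Pⱼ (1 ⊗ Qⱼ)]`, and each such partial trace is positive semidefinite: writing
`Qⱼ = Yᴴ Y`, it is `Tr_Y[(1 ⊗ Y) Pⱼ (1 ⊗ Y)ᴴ]`. -/

open Matrix

section PartialTrace
variable {α β : Type*} [Fintype β]

theorem ptraceY_eq_sum_submatrix (M : Matrix (α × β) (α × β) ℂ) :
    ptraceY M = ∑ k, M.submatrix (·, k) (·, k) := by
  ext i i'
  simp [ptraceY, Matrix.sum_apply]

theorem posSemidef_ptraceY {M : Matrix (α × β) (α × β) ℂ} (hM : M.PosSemidef) :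
    (ptraceY M).PosSemidef := by
  rw [ptraceY_eq_sum_submatrix]
  exact posSemidef_sum _ fun k _ => hM.submatrix _

variable [Fintype α] [DecidableEq α]

theorem ptraceY_mul_one_kronecker_apply (M : Matrix (α × β) (α × β) ℂ) (N : Matrix β β ℂ)
    (x x' : α) : ptraceY (M * (1 ⊗ₖ N)) x x' = ∑ u, ∑ v, M (x, u) (x', v) * N v u := by
  simp [ptraceY, mul_apply, Fintype.sum_prod_type, one_apply]

theorem ptraceY_mul_one_kronecker_comm (M : Matrix (α × β) (α × β) ℂ) (N : Matrix β β ℂ) :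
    ptraceY (M * (1 ⊗ₖ N)) = ptraceY ((1 ⊗ₖ N) * M) := by
  ext x x'
  rw [ptraceY_mul_one_kronecker_apply, Finset.sum_comm]
  simp [ptraceY, mul_apply, Fintype.sum_prod_type, one_apply, mul_comm]

theorem posSemidef_ptraceY_mul_one_kronecker {P : Matrix (α × β) (α × β) ℂ}
    {Q : Matrix β β ℂ} (hP : P.PosSemidef) (hQ : Q.PosSemidef) :
    (ptraceY (P * (1 ⊗ₖ Q))).PosSemidef := by
  classical
  open scoped MatrixOrder in
  obtain ⟨Y, rfl⟩ := CStarAlgebra.nonneg_iff_eq_star_mul_self.mp hQ.nonneg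
  have hfactor : (1 : Matrix α α ℂ) ⊗ₖ (star Y * Y) = (1 ⊗ₖ Y)ᴴ * (1 ⊗ₖ Y) := by
    rw [conjTranspose_kronecker, conjTranspose_one, ← mul_kronecker_mul, one_mul,
      star_eq_conjTranspose]
  rw [hfactor, ← mul_assoc, ptraceY_mul_one_kronecker_comm, ← mul_assoc]
  exact posSemidef_ptraceY (hP.mul_mul_conjTranspose_same _)

end PartialTrace

section SepCone
variable {m : ℕ} {ι : Fin m → Type*} [∀ j, Fintype (ι j)]

theorem famTensor_one [∀ j, DecidableEq (ι j)] :
    famTensor (fun j => (1 : Matrix (ι j) (ι j) ℂ)) = 1 := by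
  ext x y
  simp [famTensor, one_apply, Finset.prod_ite_zero, funext_iff]

theorem isFullySep_famTensor {P : ∀ j, Matrix (ι j) (ι j) ℂ} (hP : ∀ j, (P j).PosSemidef) :
    IsFullySep (famTensor P) :=
  ⟨1, fun _ => P, fun _ => hP, by simp⟩

theorem isFullySep_one [∀ j, DecidableEq (ι j)] :
    IsFullySep (1 : Matrix (∀ j, ι j) (∀ j, ι j) ℂ) :=
  famTensor_one (ι := ι) ▸ isFullySep_famTensor fun _ => PosSemidef.one

theorem InSepDual.add {W₁ W₂ : Matrix (∀ j, ι j) (∀ j, ι j) ℂ}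
    (h₁ : InSepDual W₁) (h₂ : InSepDual W₂) : InSepDual (W₁ + W₂) := fun S hS => by
  rw [Matrix.mul_add, trace_add, Complex.add_re]
  exact add_nonneg (h₁ S hS) (h₂ S hS)

theorem InSepDual.smul {W : Matrix (∀ j, ι j) (∀ j, ι j) ℂ} (h : InSepDual W) {r : ℝ}
    (hr : 0 ≤ r) : InSepDual ((r : ℂ) • W) := fun S hS => by
  rw [Matrix.mul_smul, trace_smul, smul_eq_mul, Complex.re_ofReal_mul]
  exact mul_nonneg hr (h S hS)

theorem InSepDual.sum {γ : Type*} {s : Finset γ} {W : γ → Matrix (∀ j, ι j) (∀ j, ι j) ℂ}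
    (h : ∀ i ∈ s, InSepDual (W i)) : InSepDual (∑ i ∈ s, W i) := fun S hS => by
  rw [Matrix.mul_sum, trace_sum, Complex.re_sum]
  exact Finset.sum_nonneg fun i hi => h i hi S hS

theorem InSepDual.of_famTensor {W : Matrix (∀ j, ι j) (∀ j, ι j) ℂ}
    (h : ∀ P : ∀ j, Matrix (ι j) (ι j) ℂ, (∀ j, (P j).PosSemidef) →
      0 ≤ (famTensor P * W).trace.re) : InSepDual W := by
  rintro S ⟨k, P, hP, rfl⟩
  rw [Finset.sum_mul, trace_sum, Complex.re_sum]
  exact Finset.sum_nonneg fun i _ => h (P i) (hP i)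

end SepCone

section SlotKronecker
variable {m : ℕ} {ι κ : Fin m → Type*}

noncomputable def slotKronecker : Matrix (∀ j, ι j) (∀ j, ι j) ℂ →ₗ[ℂ]
    Matrix (∀ j, κ j) (∀ j, κ j) ℂ →ₗ[ℂ] Matrix (∀ j, ι j × κ j) (∀ j, ι j × κ j) ℂ :=
  (kroneckerBilinear (R := ℂ) (α := ℂ)).compr₂
    (reindexLinearEquiv ℂ ℂ (piProd ι κ).symm (piProd ι κ).symm).toLinearMap

theorem slotKronecker_apply (A : Matrix (∀ j, ι j) (∀ j, ι j) ℂ)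
    (B : Matrix (∀ j, κ j) (∀ j, κ j) ℂ) :
    slotKronecker A B = reindex (piProd ι κ).symm (piProd ι κ).symm (A ⊗ₖ B) :=
  rfl

theorem slotKronecker_one_one [∀ j, DecidableEq (ι j)] [∀ j, DecidableEq (κ j)] :
    slotKronecker (1 : Matrix (∀ j, ι j) (∀ j, ι j) ℂ) (1 : Matrix (∀ j, κ j) (∀ j, κ j) ℂ)
      = 1 := by
  rw [slotKronecker_apply, one_kronecker_one, reindex_apply, submatrix_one_equiv]

theorem slotKronecker_swap (A : Matrix (∀ j, ι j) (∀ j, ι j) ℂ)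
    (B : Matrix (∀ j, κ j) (∀ j, κ j) ℂ) :
    (slotKronecker B A).submatrix (Equiv.piCongrRight fun j => Equiv.prodComm (ι j) (κ j))
      (Equiv.piCongrRight fun j => Equiv.prodComm (ι j) (κ j)) = slotKronecker A B := by
  ext f g
  simp [slotKronecker_apply, piProd, mul_comm]

variable [∀ j, Fintype (ι j)] [∀ j, Fintype (κ j)] [∀ j, DecidableEq (ι j)]

theorem trace_famTensor_mul_slotKronecker_famTensor
    (P : ∀ j, Matrix (ι j × κ j) (ι j × κ j) ℂ) (A : Matrix (∀ j, ι j) (∀ j, ι j) ℂ)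
    (Q : ∀ j, Matrix (κ j) (κ j) ℂ) :
    (famTensor P * slotKronecker A (famTensor Q)).trace
      = (famTensor (fun j => ptraceY (P j * (1 ⊗ₖ Q j))) * A).trace := by
  simp only [trace, diag, mul_apply, ← (piProd ι κ).symm.sum_comp, Fintype.sum_prod_type,
    famTensor, ptraceY_mul_one_kronecker_apply, slotKronecker_apply, reindex_apply,
    submatrix_apply, Equiv.symm_symm, piProd, Equiv.coe_fn_mk, Equiv.coe_fn_symm_mk,
    kronecker_apply, Fintype.prod_sum, Finset.sum_mul]
  refine Finset.sum_congr rfl fun x _ => ?_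
  rw [Finset.sum_comm]
  refine Finset.sum_congr rfl fun x' _ => Finset.sum_congr rfl fun y _ =>
    Finset.sum_congr rfl fun y' _ => ?_
  rw [Finset.prod_mul_distrib]
  ring

end SlotKronecker

section LocalReindex
variable {m : ℕ} {ι ι' : Fin m → Type*} [∀ j, Fintype (ι j)] [∀ j, Fintype (ι' j)]

theorem IsFullySep.submatrix_piCongrRight {S : Matrix (∀ j, ι' j) (∀ j, ι' j) ℂ}
    (hS : IsFullySep S) (e : ∀ j, ι j ≃ ι' j) :
    IsFullySep (S.submatrix (Equiv.piCongrRight e) (Equiv.piCongrRight e)) := by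
  obtain ⟨k, P, hP, rfl⟩ := hS
  refine ⟨k, fun i j => (P i j).submatrix (e j) (e j), fun i j => (hP i j).submatrix _, ?_⟩
  ext x y
  simp [famTensor, Matrix.sum_apply]

theorem InSepDual.submatrix_piCongrRight {W : Matrix (∀ j, ι' j) (∀ j, ι' j) ℂ}
    (hW : InSepDual W) (e : ∀ j, ι j ≃ ι' j) :
    InSepDual (W.submatrix (Equiv.piCongrRight e) (Equiv.piCongrRight e)) := by
  intro S hS
  set σ := Equiv.piCongrRight e
  have htrace : (S * W.submatrix σ σ).trace = (S.submatrix σ.symm σ.symm * W).trace := by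
    nth_rewrite 1 [show S = (S.submatrix σ.symm σ.symm).submatrix σ σ by simp]
    rw [submatrix_mul_equiv, trace, trace]
    exact σ.sum_comp fun x => (S.submatrix σ.symm σ.symm * W) x x
  rw [htrace]
  exact hW _ (hS.submatrix_piCongrRight fun j => (e j).symm)

end LocalReindex

section SlotKroneckerDual
variable {m : ℕ} {ι κ : Fin m → Type*} [∀ j, Fintype (ι j)] [∀ j, Fintype (κ j)]

theorem InSepDual.slotKronecker_right [∀ j, DecidableEq (ι j)]
    {A : Matrix (∀ j, ι j) (∀ j, ι j) ℂ} {B : Matrix (∀ j, κ j) (∀ j, κ j) ℂ}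
    (hA : InSepDual A) (hB : IsFullySep B) : InSepDual (slotKronecker A B) := by
  obtain ⟨k, Q, hQ, rfl⟩ := hB
  rw [map_sum]
  refine InSepDual.sum fun i _ => InSepDual.of_famTensor fun P hP => ?_
  rw [trace_famTensor_mul_slotKronecker_famTensor]
  exact hA _ (isFullySep_famTensor fun j =>
    posSemidef_ptraceY_mul_one_kronecker (hP j) (hQ i j))

theorem InSepDual.slotKronecker_left [∀ j, DecidableEq (κ j)]
    {A : Matrix (∀ j, ι j) (∀ j, ι j) ℂ} {B : Matrix (∀ j, κ j) (∀ j, κ j) ℂ}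
    (hA : IsFullySep A) (hB : InSepDual B) : InSepDual (slotKronecker A B) :=
  slotKronecker_swap A B ▸ (hB.slotKronecker_right hA).submatrix_piCongrRight _

end SlotKroneckerDual

/-- If `t₁, t₂ ≥ 0`, `C₁ ∈ Sep(X₁,…,X_m)` with `t₁·1 − C₁` in the dual
separable cone, and `C₂ ∈ Sep(Y₁,…,Y_m)` with `t₂·1 − C₂` in the dual separable cone, then
`t₁t₂·1 − C₁⊗C₂ ∈ Sep(X₁⊗Y₁,…,X_m⊗Y_m)*`. -/
theorem dual_tensor_bound {m : ℕ} {ι κ : Fin m → Type}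
    [∀ j, Fintype (ι j)] [∀ j, Fintype (κ j)]
    [∀ j, DecidableEq (ι j)] [∀ j, DecidableEq (κ j)]
    (t₁ t₂ : ℝ) (ht₁ : 0 ≤ t₁) (ht₂ : 0 ≤ t₂)
    (C₁ : Matrix (∀ j, ι j) (∀ j, ι j) ℂ) (C₂ : Matrix (∀ j, κ j) (∀ j, κ j) ℂ)
    (hC₁ : IsFullySep C₁) (hC₂ : IsFullySep C₂)
    (hD₁ : InSepDual ((t₁ : ℂ) • (1 : Matrix (∀ j, ι j) (∀ j, ι j) ℂ) - C₁))
    (hD₂ : InSepDual ((t₂ : ℂ) • (1 : Matrix (∀ j, κ j) (∀ j, κ j) ℂ) - C₂)) :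
    InSepDual (ι := fun j => ι j × κ j)
      (((t₁ * t₂ : ℝ) : ℂ) • (1 : Matrix (∀ j, ι j × κ j) (∀ j, ι j × κ j) ℂ) -
        Matrix.reindex (piProd ι κ).symm (piProd ι κ).symm (C₁ ⊗ₖ C₂)) := by
  have h₁ : InSepDual (slotKronecker ((t₁ : ℂ) • 1 - C₁) ((t₂ : ℂ) • 1 + C₂)) := by
    rw [map_add, map_smul]
    exact ((hD₁.slotKronecker_right isFullySep_one).smul ht₂).add (hD₁.slotKronecker_right hC₂)
  have h₂ : InSepDual (slotKronecker ((t₁ : ℂ) • 1 + C₁) ((t₂ : ℂ) • 1 - C₂)) := by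
    rw [map_add, map_smul, LinearMap.add_apply, LinearMap.smul_apply]
    exact ((InSepDual.slotKronecker_left isFullySep_one hD₂).smul ht₁).add
      (InSepDual.slotKronecker_left hC₁ hD₂)
  have hsplit : ((t₁ * t₂ : ℝ) : ℂ) • 1 - slotKronecker C₁ C₂
      = ((1 / 2 : ℝ) : ℂ) • (slotKronecker ((t₁ : ℂ) • 1 - C₁) ((t₂ : ℂ) • 1 + C₂)
        + slotKronecker ((t₁ : ℂ) • 1 + C₁) ((t₂ : ℂ) • 1 - C₂)) := by
    rw [← slotKronecker_one_one]
    simp only [map_add, map_sub, map_smul, LinearMap.add_apply, LinearMap.sub_apply,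
      LinearMap.smul_apply]
    push_cast
    module
  rw [← slotKronecker_apply, hsplit]
  exact (h₁.add h₂).smul (by norm_num)
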